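/- Let μ ∈ M(𝕋^d) and let Λ ⊂ ℤ^d be a finite subset, and suppose Γ(μ,Λ) has at least two elements. For each distinct pair m, n ∈ Γ, define α_{m,n} ∈ ℝ/ℤ by e^{2πi α_{m,n}} = μ̂(m)/μ̂(n), and set S = ∩_{m,n ∈ Γ, m ≠ n} {x ∈ 𝕋^d : x·(m−n) + α_{m,n} ∈ ℤ}, an intersection of C(#Γ,2) families of periodic hyperplanes. Then every minimal extrapolation ν ∈ 𝓔(μ,Λ) is a singular measure supported in the closed set S. In particular, if d = 1, then S is a finite set of points and every minimal extrapolation is a discrete measure supported in S. -/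

import Mathlib

/- Setting: `M(𝕋^d)`, the space of complex bounded Radon measures on the `d`-dimensional
torus, is identified with the continuous dual of `C(𝕋^d, ℂ)` via the Riesz representation
theorem; the total variation norm corresponds to the operator norm. -/

open MeasureTheory Complex Real

noncomputable section

theorem Real.fact_zero_lt_one : Fact ((0 : ℝ) < 1) := ⟨one_pos⟩

attribute [local instance] Real.fact_zero_lt_one

/-- The `d`-dimensional torus `𝕋^d = (ℝ/ℤ)^d`. -/
abbrev Torus (d : ℕ) : Type := Fin d → AddCircle (1 : ℝ)

/-- The character `x ↦ e^{2πi m·x}` on the torus, for `m ∈ ℤ^d`. -/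
def torusChar {d : ℕ} (m : Fin d → ℤ) : C(Torus d, ℂ) :=
  ⟨fun x => ∏ i, fourier (m i) (x i), by
    refine continuous_finsetProd _ fun i _ => ?_
    exact (map_continuous (fourier (m i))).comp (continuous_apply i)⟩

/-- The space `M(𝕋^d)` of complex bounded Radon measures on the torus, identified (via the
Riesz representation theorem) with the continuous dual of `C(𝕋^d, ℂ)`; the total variation
norm is the operator norm. -/
abbrev TorusMeasure (d : ℕ) : Type := C(Torus d, ℂ) →L[ℂ] ℂ

/-- The Fourier coefficient `μ̂(m) = ∫_{𝕋^d} e^{-2πi m·x} dμ(x)`. -/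
def mFourierCoeff {d : ℕ} (μ : TorusMeasure d) (m : Fin d → ℤ) : ℂ :=
  μ (torusChar (-m))

/-- `ν` is an extrapolation of `μ` from `Λ` if `ν̂ = μ̂` on `Λ`. -/
def IsExtrapolation {d : ℕ} (μ : TorusMeasure d) (Λ : Finset (Fin d → ℤ))
    (ν : TorusMeasure d) : Prop :=
  ∀ m ∈ Λ, mFourierCoeff ν m = mFourierCoeff μ m

/-- `ε(μ,Λ) = inf {‖σ‖ : σ ∈ M(𝕋^d), σ̂ = μ̂ on Λ}`. -/
def minExtNorm {d : ℕ} (μ : TorusMeasure d) (Λ : Finset (Fin d → ℤ)) : ℝ :=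
  sInf ((fun ν => ‖ν‖) '' {ν | IsExtrapolation μ Λ ν})

/-- `ν` is a minimal extrapolation of `μ` from `Λ`, i.e. `ν ∈ 𝓔(μ,Λ)`:
an extrapolation whose total variation norm equals `ε(μ,Λ)`. -/
def IsMinimalExtrapolation {d : ℕ} (μ : TorusMeasure d) (Λ : Finset (Fin d → ℤ))
    (ν : TorusMeasure d) : Prop :=
  IsExtrapolation μ Λ ν ∧ ‖ν‖ = minExtNorm μ Λ

/-- `Γ(μ,Λ) = {m ∈ Λ : |μ̂(m)| = ε(μ,Λ)}`. -/
def gammaSet {d : ℕ} (μ : TorusMeasure d) (Λ : Finset (Fin d → ℤ)) : Set (Fin d → ℤ) :=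
  {m | m ∈ Λ ∧ ‖mFourierCoeff μ m‖ = minExtNorm μ Λ}

/-- The measure `ν` is supported in the set `S`: it annihilates every continuous
function vanishing on `S` (for closed `S` this says `supp(ν) ⊆ S`). -/
def SupportedIn {d : ℕ} (ν : TorusMeasure d) (S : Set (Torus d)) : Prop :=
  ∀ f : C(Torus d, ℂ), (∀ x ∈ S, f x = 0) → ν f = 0

/-- The pairing `⟨f,μ⟩ = ∫_{𝕋^d} f(x) conj(dμ(x)) = conj (μ (conj f))`. -/
def mPairing {d : ℕ} (f : C(Torus d, ℂ)) (μ : TorusMeasure d) : ℂ :=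
  starRingEnd ℂ (μ (star f))

/-- `C(𝕋^d;Λ)`: the subspace of trigonometric polynomials
`f(x) = ∑_{m ∈ Λ} a_m e^{2πi m·x}` with frequencies in `Λ`. -/
def trigPoly {d : ℕ} (Λ : Finset (Fin d → ℤ)) : Submodule ℂ C(Torus d, ℂ) :=
  Submodule.span ℂ (torusChar '' (Λ : Set (Fin d → ℤ)))

/-- For a continuous `g` with `‖g‖_∞ ≤ 1`, the assertion that `sign(ν) = g`
`ν`-almost everywhere, expressed through the standard equivalent condition
`⟨g,ν⟩ = ‖ν‖` (obtained by integrating the Radon–Nikodym identity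
`∫ f d|ν| = ∫ f conj(sign ν) dν` against `f = conj g` and using `|ν|(𝕋^d) = ‖ν‖`). -/
def SignEqAE {d : ℕ} (ν : TorusMeasure d) (g : C(Torus d, ℂ)) : Prop :=
  mPairing g ν = (‖ν‖ : ℂ)

/-- `ν` is a positive measure: it takes nonnegative real values on nonnegative real-valued
continuous functions. -/
def IsPositiveMeasure {d : ℕ} (ν : TorusMeasure d) : Prop :=
  ∀ f : C(Torus d, ℂ), (∀ x, (f x).im = 0 ∧ 0 ≤ (f x).re) → (ν f).im = 0 ∧ 0 ≤ (ν f).re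

/-- The Dirac measure `δ_x`: evaluation at `x`. -/
def diracM {d : ℕ} (x : Torus d) : TorusMeasure d :=
  ContinuousMap.evalCLM ℂ x

/-- The modulation `M_n ν`, defined by `d(M_n ν)(x) = e^{2πi n·x} dν(x)`. -/
def modulateM {d : ℕ} (n : Fin d → ℤ) (ν : TorusMeasure d) : TorusMeasure d :=
  ν.comp (ContinuousLinearMap.mul ℂ C(Torus d, ℂ) (torusChar n))

/-- The intersection `S` of the `(#Γ choose 2)` families of periodic hyperplanes
`{x ∈ 𝕋^d : x·(m−n) + α_{m,n} ∈ ℤ}`, over distinct pairs `m, n ∈ Γ(μ,Λ)`. -/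
def hyperSet {d : ℕ} (μ : TorusMeasure d) (Λ : Finset (Fin d → ℤ))
    (α : (Fin d → ℤ) → (Fin d → ℤ) → ℝ) : Set (Torus d) :=
  {x | ∀ m ∈ gammaSet μ Λ, ∀ n ∈ gammaSet μ Λ, m ≠ n →
    (∑ i, (m i - n i) • x i) + ((α m n : ℝ) : AddCircle (1 : ℝ)) = 0}

/-! For `m ∈ Γ` the function `u_m = (ε / μ̂(m)) e^{-2πi m·x}` has sup norm at most `1`, and every
minimal extrapolation `ν` satisfies `ν(u_m) = ν̂(m) ε / μ̂(m) = ε = ‖ν‖`: each `u_m` is a norming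
function for `ν`. A functional on `C(X)` that attains its norm at `w` with `‖w‖ ≤ 1` annihilates
every `h` with `|h| ≤ 1 - |w|`, because `w + c h` still has norm at most `1` for `|c| ≤ 1`. Hence
it kills the ideal generated by `1 - |w|`, and therefore its closure, which consists of all
functions vanishing on the peak set `{|w| = 1}`. Applied to the midpoints `(u_m + u_n) / 2`,
strict convexity of `ℂ` turns the peak set into `{u_m = u_n}`, and this is the periodic hyperplane
`x·(m − n) + α_{m,n} ∈ ℤ`. -/

section NormAttainingFunctionals

variable {𝕜 : Type*} [RCLike 𝕜]

theorem ContinuousLinearMap.apply_eq_zero_of_norm_add_smul_le_one {E : Type*}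
    [SeminormedAddCommGroup E] [NormedSpace 𝕜 E] (ν : E →L[𝕜] 𝕜) {w h : E}
    (hνw : ν w = ‖ν‖) (hh : ∀ c : 𝕜, ‖c‖ ≤ 1 → ‖w + c • h‖ ≤ 1) : ν h = 0 := by
  by_contra hne
  set c : 𝕜 := ‖ν h‖ / ν h
  have hc : ‖c‖ = 1 := by simp [c, hne]
  have hνc : ν (w + c • h) = ‖ν‖ + ‖ν h‖ := by
    simp [c, hνw, div_mul_cancel₀ _ hne]
  have : ‖ν‖ + ‖ν h‖ ≤ ‖ν‖ := by
    calc ‖ν‖ + ‖ν h‖ = ‖ν (w + c • h)‖ := by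
          rw [hνc, ← RCLike.ofReal_add, RCLike.norm_ofReal, abs_of_nonneg (by positivity)]
      _ ≤ ‖ν‖ * ‖w + c • h‖ := ν.le_opNorm _
      _ ≤ ‖ν‖ := mul_le_of_le_one_right (norm_nonneg ν) (hh c hc.le)
  exact hne (norm_le_zero_iff.mp (by linarith))

variable {X : Type*} [TopologicalSpace X] [CompactSpace X]

def ContinuousMap.oneSubNorm (w : C(X, 𝕜)) : C(X, 𝕜) :=
  ⟨fun x => ((1 - ‖w x‖ : ℝ) : 𝕜), by fun_prop⟩

theorem ContinuousLinearMap.apply_mul_oneSubNorm_eq_zero (ν : C(X, 𝕜) →L[𝕜] 𝕜) {w : C(X, 𝕜)}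
    (hw : ‖w‖ ≤ 1) (hνw : ν w = ‖ν‖) (g : C(X, 𝕜)) : ν (g * w.oneSubNorm) = 0 := by
  set r : ℝ := (‖g‖ + 1)⁻¹
  have hr : 0 < r := by positivity
  have hrg : r * ‖g‖ ≤ 1 := by
    rw [inv_mul_le_iff₀ (by positivity)]; linarith
  suffices ν ((r : 𝕜) • (g * w.oneSubNorm)) = 0 by
    simpa [hr.ne'] using this
  refine ν.apply_eq_zero_of_norm_add_smul_le_one hνw fun c hc => ?_
  refine (ContinuousMap.norm_le _ zero_le_one).mpr fun x => ?_
  have hwx : ‖w x‖ ≤ 1 := (w.norm_coe_le_norm x).trans hw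
  have hgx : ‖c‖ * (r * ‖g x‖) ≤ 1 :=
    calc ‖c‖ * (r * ‖g x‖) ≤ 1 * (r * ‖g‖) := by
          gcongr
          exact g.norm_coe_le_norm x
      _ ≤ 1 := by linarith
  calc ‖w x + c * (r * (g x * ((1 - ‖w x‖ : ℝ) : 𝕜)))‖
      ≤ ‖w x‖ + ‖c‖ * (r * ‖g x‖) * (1 - ‖w x‖) := by
        refine (norm_add_le _ _).trans (le_of_eq ?_)
        rw [norm_mul, norm_mul, norm_mul, RCLike.norm_ofReal, RCLike.norm_ofReal,
          abs_of_pos hr, abs_of_nonneg (by linarith)]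
        ring
    _ ≤ ‖w x‖ + 1 * (1 - ‖w x‖) := by gcongr
    _ = 1 := by ring

theorem ContinuousLinearMap.apply_eq_zero_of_forall_apply_mul_eq_zero [T2Space X]
    (ν : C(X, 𝕜) →L[𝕜] 𝕜) {S : Set C(X, 𝕜)} (hS : ∀ ρ ∈ S, ∀ g, ν (g * ρ) = 0)
    {f : C(X, 𝕜)} (hf : ∀ x, (∀ ρ ∈ S, ρ x = 0) → f x = 0) : ν f = 0 := by
  have hspan : ∀ h ∈ Ideal.span S, ∀ g, ν (g * h) = 0 := by
    intro h hh
    induction hh using Submodule.span_induction with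
    | mem ρ hρ => exact hS ρ hρ
    | zero => simp
    | add a b _ _ ha hb => intro g; simp [mul_add, ha, hb]
    | smul a b _ hb => intro g; simpa [mul_assoc] using hb (g * a)
  have hf_mem : f ∈ (Ideal.span S).closure := by
    rw [← ContinuousMap.idealOfSet_ofIdeal_eq_closure]
    exact fun x hx => hf x fun ρ hρ =>
      ContinuousMap.notMem_setOfIdeal.mp hx (Ideal.subset_span hρ)
  have hker : (Ideal.span S : Set C(X, 𝕜)) ⊆ ν ⁻¹' {0} := fun h hh => by
    simpa using hspan h hh 1
  exact closure_minimal hker (isClosed_singleton.preimage ν.continuous) hf_mem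

theorem ContinuousLinearMap.apply_eq_zero_of_forall_norm_eq_one [T2Space X]
    (ν : C(X, 𝕜) →L[𝕜] 𝕜) {W : Set C(X, 𝕜)} (hW : ∀ w ∈ W, ‖w‖ ≤ 1 ∧ ν w = ‖ν‖)
    {f : C(X, 𝕜)} (hf : ∀ x, (∀ w ∈ W, ‖w x‖ = 1) → f x = 0) : ν f = 0 := by
  refine ν.apply_eq_zero_of_forall_apply_mul_eq_zero (S := ContinuousMap.oneSubNorm '' W) ?_ ?_
  · rintro _ ⟨w, hw, rfl⟩
    exact ν.apply_mul_oneSubNorm_eq_zero (hW w hw).1 (hW w hw).2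
  · refine fun x hx => hf x fun w hw => ?_
    have := hx _ ⟨w, hw, rfl⟩
    simp only [ContinuousMap.oneSubNorm, ContinuousMap.coe_mk, RCLike.ofReal_eq_zero] at this
    linarith

end NormAttainingFunctionals

theorem eq_and_norm_eq_one_of_norm_add_eq_two {E : Type*} [NormedAddCommGroup E]
    [NormedSpace ℝ E] [StrictConvexSpace ℝ E] {a b : E} (ha : ‖a‖ ≤ 1) (hb : ‖b‖ ≤ 1)
    (hab : ‖a + b‖ = 2) : a = b ∧ ‖a‖ = 1 := by
  have hle := norm_add_le a b
  have ha1 : ‖a‖ = 1 := by linarith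
  exact ⟨eq_of_norm_eq_of_norm_add_eq (by linarith) (by linarith), ha1⟩

theorem AddCircle.finite_setOf_zsmul_add_eq_zero {p : ℝ} {k : ℤ} (hk : k ≠ 0)
    (c : AddCircle p) : {y : AddCircle p | k • y + c = 0}.Finite := by
  rcases Set.eq_empty_or_nonempty {y : AddCircle p | k • y + c = 0} with he | ⟨y₀, hy₀⟩
  · simp [he]
  have htorsion : {z : AddCircle p | k • z = 0}.Finite :=
    AddCircle.finite_torsion_of_isSMulRegular_int p k (.of_ne_zero hk)
  refine (htorsion.image (· + y₀)).subset fun y hy => ⟨y - y₀, ?_, sub_add_cancel y y₀⟩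
  simp only [Set.mem_ofPred_eq] at hy hy₀ ⊢
  rw [zsmul_sub, ← add_sub_add_right_eq_sub _ _ c, hy, hy₀, sub_zero]

section TorusCharacters

variable {d : ℕ}

theorem norm_torusChar_apply (m : Fin d → ℤ) (x : Torus d) : ‖torusChar m x‖ = 1 := by
  simp [torusChar, norm_prod, Circle.norm_coe]

theorem torusChar_add_apply (m n : Fin d → ℤ) (x : Torus d) :
    torusChar (m + n) x = torusChar m x * torusChar n x := by
  simp only [torusChar, ContinuousMap.coe_mk, Pi.add_apply, fourier_add, ← Finset.prod_mul_distrib]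

theorem torusChar_apply_eq_toCircle (m : Fin d → ℤ) (x : Torus d) :
    torusChar m x = AddCircle.toCircle (∑ i, m i • x i) := by
  have hsum : AddCircle.toCircle (∑ i, m i • x i) = ∏ i, AddCircle.toCircle (m i • x i) :=
    map_prod AddCircle.toCircle_addChar.toMonoidHom (fun i => Multiplicative.ofAdd (m i • x i)) _
  simp only [torusChar, ContinuousMap.coe_mk, fourier_apply, hsum]
  exact (map_prod Circle.coeHom _ _).symm

theorem sum_zsmul_add_coe_eq_zero_iff (m : Fin d → ℤ) (a : ℝ) (x : Torus d) :
    ∑ i, m i • x i + (a : AddCircle (1 : ℝ)) = 0 ↔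
      torusChar m x * Complex.exp (2 * π * Complex.I * a) = 1 := by
  rw [← (AddCircle.injective_toCircle one_ne_zero).eq_iff, AddCircle.toCircle_add,
    AddCircle.toCircle_zero, ← Circle.coe_inj, Circle.coe_mul, ← torusChar_apply_eq_toCircle,
    AddCircle.toCircle_apply_mk, Circle.coe_exp, Circle.coe_one]
  push_cast
  ring_nf

end TorusCharacters

theorem isClosed_hyperSet {d : ℕ} (μ : TorusMeasure d) (Λ : Finset (Fin d → ℤ))
    (α : (Fin d → ℤ) → (Fin d → ℤ) → ℝ) : IsClosed (hyperSet μ Λ α) := by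
  simp only [hyperSet, Set.ofPred_forall]
  exact isClosed_biInter fun m _ => isClosed_biInter fun n _ => isClosed_iInter fun _ =>
    isClosed_eq (by fun_prop) continuous_const

theorem finite_hyperSet (μ : TorusMeasure 1) (Λ : Finset (Fin 1 → ℤ))
    (hΓ : (gammaSet μ Λ).Nontrivial) (α : (Fin 1 → ℤ) → (Fin 1 → ℤ) → ℝ) :
    (hyperSet μ Λ α).Finite := by
  obtain ⟨m, hm, n, hn, hmn⟩ := hΓ
  have hk : m 0 - n 0 ≠ 0 := fun h =>
    hmn (funext fun i => by fin_cases i; simpa [sub_eq_zero] using h)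
  have hinj : Function.Injective fun x : Torus 1 => x 0 := fun x y h =>
    funext fun i => by fin_cases i; exact h
  refine ((AddCircle.finite_setOf_zsmul_add_eq_zero hk (α m n)).preimage hinj.injOn).subset
    fun x hx => ?_
  simpa using hx m hm n hn hmn

section NormingCharacters

variable {d : ℕ} {μ ν : TorusMeasure d} {Λ : Finset (Fin d → ℤ)} {m n : Fin d → ℤ}

def normingChar (μ : TorusMeasure d) (Λ : Finset (Fin d → ℤ)) (m : Fin d → ℤ) :
    C(Torus d, ℂ) :=
  ((minExtNorm μ Λ : ℂ) / mFourierCoeff μ m) • torusChar (-m)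

theorem norm_normingChar_le_one (hm : m ∈ gammaSet μ Λ) : ‖normingChar μ Λ m‖ ≤ 1 := by
  refine (ContinuousMap.norm_le _ zero_le_one).mpr fun x => ?_
  simp [normingChar, norm_torusChar_apply, ← hm.2, div_self_le_one]

theorem IsExtrapolation.apply_normingChar (hν : IsExtrapolation μ Λ ν)
    (hm : m ∈ gammaSet μ Λ) : ν (normingChar μ Λ m) = minExtNorm μ Λ := by
  have hνm : ν (torusChar (-m)) = mFourierCoeff μ m := hν m hm.1
  rw [normingChar, map_smul, hνm, smul_eq_mul]
  -- if `μ̂ m = 0` then `ε = ‖μ̂ m‖ = 0`, so the junk value `ε / 0 = 0` does no harm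
  refine div_mul_cancel_of_imp fun h => ?_
  simp [← hm.2, h]

theorem sum_zsmul_add_coe_eq_zero_of_normingChar_eq (hn : n ∈ gammaSet μ Λ) {a : ℝ}
    (ha : Complex.exp (2 * π * Complex.I * a) = mFourierCoeff μ m / mFourierCoeff μ n)
    {x : Torus d} (heq : normingChar μ Λ m x = normingChar μ Λ n x)
    (hne : normingChar μ Λ m x ≠ 0) :
    ∑ i, (m i - n i) • x i + (a : AddCircle (1 : ℝ)) = 0 := by
  rw [show ∑ i, (m i - n i) • x i = ∑ i, (m - n) i • x i from rfl,
    sum_zsmul_add_coe_eq_zero_iff, ha]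
  have hsplit : torusChar (-n) x = torusChar (m - n) x * torusChar (-m) x := by
    rw [← torusChar_add_apply, ← sub_eq_add_neg, sub_sub_cancel_left]
  simp only [normingChar, ContinuousMap.smul_apply, smul_eq_mul, hsplit] at heq hne
  have hε : (minExtNorm μ Λ : ℂ) ≠ 0 := left_ne_zero_of_mul (left_ne_zero_of_mul hne)
  have hμm : mFourierCoeff μ m ≠ 0 := by simpa using right_ne_zero_of_mul (left_ne_zero_of_mul hne)
  have hμn : mFourierCoeff μ n ≠ 0 := by
    rw [← norm_ne_zero_iff, hn.2]; exact_mod_cast hε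
  have hχ : torusChar (-m) x ≠ 0 := right_ne_zero_of_mul hne
  field_simp at heq ⊢
  exact heq.symm

theorem IsMinimalExtrapolation.supportedIn_hyperSet (hν : IsMinimalExtrapolation μ Λ ν)
    {α : (Fin d → ℤ) → (Fin d → ℤ) → ℝ}
    (hα : ∀ m ∈ gammaSet μ Λ, ∀ n ∈ gammaSet μ Λ, m ≠ n →
      Complex.exp (2 * (π : ℂ) * Complex.I * (α m n : ℂ)) =
        mFourierCoeff μ m / mFourierCoeff μ n) :
    SupportedIn ν (hyperSet μ Λ α) := by
  intro f hf
  set u := normingChar μ Λ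
  refine ν.apply_eq_zero_of_forall_norm_eq_one
    (W := Set.image2 (fun m n => (2⁻¹ : ℂ) • (u m + u n)) (gammaSet μ Λ) (gammaSet μ Λ))
    ?_ fun x hx => hf x fun m hm n hn hmn => ?_
  · rintro _ ⟨m, hm, n, hn, rfl⟩
    refine ⟨?_, ?_⟩
    · have := (norm_add_le (u m) (u n)).trans
        (add_le_add (norm_normingChar_le_one hm) (norm_normingChar_le_one hn))
      rw [norm_smul]
      norm_num
      linarith
    · rw [map_smul, map_add, hν.1.apply_normingChar hm, hν.1.apply_normingChar hn, hν.2]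
      simp only [smul_eq_mul, coe_algebraMap]
      ring
  · have hpeak : ‖u m x + u n x‖ = 2 := by
      have := hx _ ⟨m, hm, n, hn, rfl⟩
      simp only [ContinuousMap.smul_apply, ContinuousMap.add_apply, norm_smul] at this
      norm_num at this
      linarith
    obtain ⟨heq, hone⟩ := eq_and_norm_eq_one_of_norm_add_eq_two
      (((u m).norm_coe_le_norm x).trans (norm_normingChar_le_one hm))
      (((u n).norm_coe_le_norm x).trans (norm_normingChar_le_one hn)) hpeak
    exact sum_zsmul_add_coe_eq_zero_of_normingChar_eq hn (hα m hm n hn hmn) heq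
      (norm_ne_zero_iff.mp (by rw [hone]; exact one_ne_zero))

end NormingCharacters

/-- **Theorem 1.2(b).** If `Γ(μ,Λ)` has at least two elements, then, with
`α_{m,n} ∈ ℝ/ℤ` defined by `e^{2πi α_{m,n}} = μ̂(m)/μ̂(n)` and
`S = ⋂_{m ≠ n ∈ Γ} {x : x·(m−n) + α_{m,n} ∈ ℤ}`, every minimal extrapolation of `μ` from
`Λ` is supported in the closed set `S`; if `d = 1`, then `S` is finite, so every minimal
extrapolation is a discrete measure supported in `S`. -/
theorem minimalExtrapolation_of_gamma_nontrivial {d : ℕ} (μ : TorusMeasure d)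
    (Λ : Finset (Fin d → ℤ)) (hΓ : (gammaSet μ Λ).Nontrivial)
    (α : (Fin d → ℤ) → (Fin d → ℤ) → ℝ)
    (hα : ∀ m ∈ gammaSet μ Λ, ∀ n ∈ gammaSet μ Λ, m ≠ n →
      Complex.exp (2 * (π : ℂ) * Complex.I * (α m n : ℂ)) =
        mFourierCoeff μ m / mFourierCoeff μ n) :
    IsClosed (hyperSet μ Λ α) ∧
    (∀ ν : TorusMeasure d, IsMinimalExtrapolation μ Λ ν → SupportedIn ν (hyperSet μ Λ α)) ∧
    (d = 1 → (hyperSet μ Λ α).Finite) := by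
  refine ⟨isClosed_hyperSet μ Λ α, fun ν hν => hν.supportedIn_hyperSet hα, ?_⟩
  rintro rfl
  exact finite_hyperSet μ Λ hΓ α

end
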